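/- Let E be a Banach space continuously embedded in the tempered distributions S'(ℝ³) such that for some σ > 0 and all λ > 0, a ∈ ℝ³, and f ∈ E, the function f(λ·+a) lies in E with λ^σ‖f(λ·+a)‖_E comparable to ‖f‖_E (with constants independent of λ, a, f). Then there exists C such that for all f ∈ E and all t > 0, t^{σ/2} ‖e^{tΔ}f‖_{L^∞} ≤ C ‖f‖_E; i.e. E embeds into the Besov space B^{−σ}_{∞,∞}. -/
import Mathlib


open MeasureTheory ENNReal Real
open scoped NNReal

noncomputable section

abbrev E3 := EuclideanSpace ℝ (Fin 3)

/-- Heat extension `e^{tΔ}f(x) = (4πt)^{−3/2} ∫ e^{−‖x−y‖²/(4t)} f(y) dy` on `ℝ³`. -/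
def heat (t : ℝ) (f : E3 → ℝ) (x : E3) : ℝ :=
  ∫ y : E3, (4 * π * t) ^ (-(3:ℝ)/2) * Real.exp (-‖x - y‖ ^ 2 / (4 * t)) * f y

lemma rpow_neg_three_half (x : ℝ) (hx : 0 < x) :
    x ^ (-(3:ℝ)/2) = (Real.sqrt x ^ 3)⁻¹ := by
  rw [Real.sqrt_eq_rpow, ← Real.rpow_natCast (x ^ ((1:ℝ)/2)) 3,
    ← Real.rpow_mul hx.le, ← Real.rpow_neg hx.le]
  norm_num

lemma heat_eq (f : E3 → ℝ) (t : ℝ) (ht : 0 < t) (x : E3) :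
    heat t f x = (Real.sqrt π ^ 3)⁻¹ *
      ∫ z : E3, f ((2 * Real.sqrt t) • z + x) * Real.exp (-‖z‖ ^ 2) := by
  set lam : ℝ := 2 * Real.sqrt t with hlamdef
  have hsq : 0 < Real.sqrt t := Real.sqrt_pos.2 ht
  have hlam : 0 < lam := by positivity
  have hlam2 : lam ^ 2 = 4 * t := by
    rw [hlamdef, mul_pow, Real.sq_sqrt ht.le]; ring
  set h : E3 → ℝ := fun y => Real.exp (-‖x - y‖ ^ 2 / (4 * t)) * f y with hh
  have cov : (∫ z : E3, h (lam • z + x)) = (lam ^ 3)⁻¹ * ∫ y, h y := by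
    have h1 := MeasureTheory.Measure.integral_comp_smul (μ := volume) (fun w => h (w + x)) lam
    have h2 : (∫ w : E3, h (w + x)) = ∫ y, h y :=
      integral_add_right_eq_self h x
    rw [h2] at h1
    simpa [finrank_euclideanSpace, abs_of_pos (by positivity : (0:ℝ) < (lam ^ 3)⁻¹),
      smul_eq_mul] using h1
  have hpt : ∀ z : E3, h (lam • z + x) = f (lam • z + x) * Real.exp (-‖z‖ ^ 2) := by
    intro z
    have hn : x - (lam • z + x) = -(lam • z) := by abel
    have : ‖x - (lam • z + x)‖ ^ 2 = lam ^ 2 * ‖z‖ ^ 2 := by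
      rw [hn, norm_neg, norm_smul, Real.norm_eq_abs, abs_of_pos hlam, mul_pow]
    simp only [hh, this, hlam2]
    rw [mul_comm]
    congr 2
    field_simp
  have hI : (∫ z : E3, f (lam • z + x) * Real.exp (-‖z‖ ^ 2))
      = (∫ z : E3, h (lam • z + x)) := by
    exact integral_congr_ae (Filter.Eventually.of_forall fun z => (hpt z).symm)
  rw [hI, cov]
  have hheat : heat t f x = (4 * π * t) ^ (-(3:ℝ)/2) * ∫ y, h y := by
    unfold heat
    simp only [hh, mul_assoc]
    rw [integral_const_mul]
  rw [hheat]
  have hc : (4 * π * t) ^ (-(3:ℝ)/2) = (Real.sqrt π ^ 3)⁻¹ * (lam ^ 3)⁻¹ := by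
    have h4t : Real.sqrt (4 * t) = lam := by
      rw [hlamdef, Real.sqrt_mul (by norm_num : (0:ℝ) ≤ 4),
        show Real.sqrt 4 = 2 by
          rw [show (4:ℝ) = 2^2 by norm_num, Real.sqrt_sq (by norm_num : (0:ℝ) ≤ 2)]]
    have : (4 : ℝ) * π * t = π * (4 * t) := by ring
    rw [this, rpow_neg_three_half _ (by positivity),
      Real.sqrt_mul Real.pi_pos.le, h4t, mul_pow, mul_inv]
  rw [hc]; ring

/-- Let `E` be a space of (function-type) tempered distributions on `ℝ³` given by a norm
functional `N`, continuously embedded into `S'` (pairing with the Gaussian test function is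
controlled by `N`), and scaling invariant of degree `σ > 0`:
`N(f(λ·+a)) ≍ λ^{−σ} N(f)`. Then `E ↪ B^{−σ}_{∞,∞}`: there is `C` with
`t^{σ/2} ‖e^{tΔ}f‖_{L^∞} ≤ C N(f)` for all `f` and `t > 0`. -/
theorem stmt14 (σ : ℝ) (hσ : 0 < σ) (N : (E3 → ℝ) → ℝ≥0∞)
    (C₀ : ℝ≥0)
    (hembed : ∀ f : E3 → ℝ,
      ENNReal.ofReal ‖∫ y : E3, f y * Real.exp (-‖y‖ ^ 2)‖ ≤ C₀ * N f)
    (K₁ K₂ : ℝ≥0) (hK₁ : 0 < K₁)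
    (hscale : ∀ (f : E3 → ℝ) (lam : ℝ), 0 < lam → ∀ a : E3,
      (K₁ : ℝ≥0∞) * ENNReal.ofReal (lam ^ (-σ)) * N f
          ≤ N (fun x => f (lam • x + a)) ∧
        N (fun x => f (lam • x + a)) ≤ (K₂ : ℝ≥0∞) * ENNReal.ofReal (lam ^ (-σ)) * N f) :
    ∃ C : ℝ≥0, ∀ (f : E3 → ℝ) (t : ℝ), 0 < t → ∀ x : E3,
      ENNReal.ofReal (t ^ (σ/2) * ‖heat t f x‖) ≤ C * N f := by
  refine ⟨Real.toNNReal ((Real.sqrt π ^ 3)⁻¹ * 2 ^ (-σ)) * C₀ * K₂, ?_⟩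
  intro f t ht x
  set lam : ℝ := 2 * Real.sqrt t with hlamdef
  have hsq : 0 < Real.sqrt t := Real.sqrt_pos.2 ht
  have hlam : 0 < lam := by positivity
  set I := ∫ z : E3, f (lam • z + x) * Real.exp (-‖z‖ ^ 2) with hIdef
  have hheat := heat_eq f t ht x
  have hnorm : ‖heat t f x‖ = (Real.sqrt π ^ 3)⁻¹ * ‖I‖ := by
    rw [hheat, norm_mul, Real.norm_eq_abs,
      abs_of_pos (by positivity : (0:ℝ) < (Real.sqrt π ^ 3)⁻¹)]
  have h1 : ENNReal.ofReal ‖I‖ ≤ C₀ * N (fun z => f (lam • z + x)) :=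
    hembed (fun z => f (lam • z + x))
  have h2 : N (fun z => f (lam • z + x)) ≤ (K₂ : ℝ≥0∞) * ENNReal.ofReal (lam ^ (-σ)) * N f :=
    (hscale f lam hlam x).2
  have key : ENNReal.ofReal (t ^ (σ/2) * ‖heat t f x‖)
      ≤ ENNReal.ofReal (t ^ (σ/2) * (Real.sqrt π ^ 3)⁻¹) * (C₀ *
          ((K₂ : ℝ≥0∞) * ENNReal.ofReal (lam ^ (-σ)) * N f)) := by
    rw [hnorm, ← mul_assoc, ENNReal.ofReal_mul (by positivity)]
    exact mul_le_mul_right (h1.trans (mul_le_mul_right h2 _)) _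
  refine key.trans (le_of_eq ?_)
  have hlamσ : lam ^ (-σ) = 2 ^ (-σ) * (Real.sqrt t) ^ (-σ) := by
    rw [hlamdef, Real.mul_rpow (by norm_num) hsq.le]
  have hts : t ^ (σ/2) * (Real.sqrt t) ^ (-σ) = 1 := by
    rw [Real.sqrt_eq_rpow, ← Real.rpow_mul ht.le, ← Real.rpow_add ht,
      show σ/2 + 1/2 * -σ = 0 by ring, Real.rpow_zero]
  have hcomb : ENNReal.ofReal (t ^ (σ/2) * (Real.sqrt π ^ 3)⁻¹) * ENNReal.ofReal (lam ^ (-σ))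
      = ENNReal.ofReal ((Real.sqrt π ^ 3)⁻¹ * 2 ^ (-σ)) := by
    rw [← ENNReal.ofReal_mul (by positivity), hlamσ]
    congr 1
    calc t ^ (σ/2) * (Real.sqrt π ^ 3)⁻¹ * (2 ^ (-σ) * (Real.sqrt t) ^ (-σ))
        = (Real.sqrt π ^ 3)⁻¹ * 2 ^ (-σ) * (t ^ (σ/2) * (Real.sqrt t) ^ (-σ)) := by ring
      _ = (Real.sqrt π ^ 3)⁻¹ * 2 ^ (-σ) := by rw [hts, mul_one]
  push_cast
  rw [show ((((Real.sqrt π ^ 3)⁻¹ * 2 ^ (-σ)).toNNReal : ℝ≥0∞))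
      = ENNReal.ofReal ((Real.sqrt π ^ 3)⁻¹ * 2 ^ (-σ)) from rfl, ← hcomb]
  ring
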